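/- arXiv:1202.4370 — 9 statements merged into one kernel-verified Lean document; each statement's English description precedes it below -/
import Mathlib

section
/- Let k be an algebraically closed field, R = k[x_0,...,x_N], and let I be a homogeneous ideal with (0) ≠ I ⊊ R. Suppose there are positive integers c and b such that I^(cm) = (I^(c))^m for all m ≥ 1 and I^(c) ⊆ I^b. Then ρ'_a(I) ≤ c/b. -/
open MvPolynomial Filter

/-- A homogeneous ideal of the polynomial ring: an ideal closed under taking
homogeneous components. -/
def IsHomogIdeal {k : Type*} [CommSemiring k] {σ : Type*} (I : Ideal (MvPolynomial σ k)) : Prop :=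
  ∀ f ∈ I, ∀ d : ℕ, MvPolynomial.homogeneousComponent d f ∈ I

/-- `α(I)`: the least degree of a nonzero element of `I`. -/
noncomputable def alphaDeg {k : Type*} [CommSemiring k] {σ : Type*}
    (I : Ideal (MvPolynomial σ k)) : ℕ :=
  sInf {d | ∃ f ∈ I, f ≠ 0 ∧ f.totalDegree = d}

/-- The `m`-th symbolic power of `I`: the intersection, over the associated primes `P`
of `I` (i.e. of `R ⧸ I`), of the contractions `I^m R_P ∩ R`. -/
noncomputable def symbolicPower {R : Type*} [CommRing R] (I : Ideal R) (m : ℕ) : Ideal R :=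
  ⨅ P : {P : Ideal R // P ∈ associatedPrimes R (R ⧸ I)},
    letI : P.1.IsPrime := IsAssociatedPrime.isPrime P.2
    (Ideal.map (algebraMap R (Localization.AtPrime P.1)) (I ^ m)).comap
      (algebraMap R (Localization.AtPrime P.1))

/-- The resurgence `ρ(I) = sup {m/r : sp m ⊄ I^r}`, stated relative to a given
symbolic power function `sp`. -/
noncomputable def resurgence {R : Type*} [CommRing R] (I : Ideal R) (sp : ℕ → Ideal R) : ℝ :=
  sSup {x : ℝ | ∃ m r : ℕ, 0 < m ∧ 0 < r ∧ ¬ sp m ≤ I ^ r ∧ x = (m : ℝ) / r}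

/-- The asymptotic resurgence `ρ_a(I) = sup {m/r : sp (mt) ⊄ I^{rt} for all t ≫ 0}`. -/
noncomputable def asymResurgence {R : Type*} [CommRing R] (I : Ideal R) (sp : ℕ → Ideal R) : ℝ :=
  sSup {x : ℝ | ∃ m r : ℕ, 0 < m ∧ 0 < r ∧
    (∀ᶠ t : ℕ in atTop, ¬ sp (m * t) ≤ I ^ (r * t)) ∧ x = (m : ℝ) / r}

/-- `ρ(I,t) = sup {m/r : sp m ⊄ I^r, m ≥ t, r ≥ t}`. -/
noncomputable def resurgenceFrom {R : Type*} [CommRing R] (I : Ideal R) (sp : ℕ → Ideal R)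
    (t : ℕ) : ℝ :=
  sSup {x : ℝ | ∃ m r : ℕ, 0 < m ∧ 0 < r ∧ t ≤ m ∧ t ≤ r ∧ ¬ sp m ≤ I ^ r ∧ x = (m : ℝ) / r}

/-- `ρ'_a(I) = limsup_{t → ∞} ρ(I,t)`. -/
noncomputable def asymResurgence' {R : Type*} [CommRing R] (I : Ideal R) (sp : ℕ → Ideal R) : ℝ :=
  Filter.limsup (resurgenceFrom I sp) Filter.atTop

/-- symbolic powers are antitone -/
lemma symbolicPower_anti {R : Type*} [CommRing R] (I : Ideal R) {m n : ℕ} (h : n ≤ m) :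
    symbolicPower I m ≤ symbolicPower I n := by
  refine iInf_mono fun P => ?_
  exact Ideal.comap_mono (Ideal.map_mono (Ideal.pow_le_pow_right h))

/-- key numeric inequality -/
lemma key_nat (b c d m q r : ℕ) (hb : 1 ≤ b) (hm1 : c + d ≤ m) (hm2 : m ≤ c * q + c)
    (hr : b * q + 1 ≤ r) : m * (b * d + c) ≤ c * (c + d) * r := by
  have h1 : c * (c + d) * (b * q + 1) ≤ c * (c + d) * r :=
    Nat.mul_le_mul_left _ hr
  refine le_trans ?_ h1
  nlinarith [Nat.mul_le_mul_right (b*d) hm2, Nat.mul_le_mul_left c hm1,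
    Nat.mul_le_mul_left (c*b) hm2]

/-- Theorem (main theorem, part (3)): if `I^(cm) = (I^(c))^m` for all `m ≥ 1` and
`I^(c) ⊆ I^b` for positive integers `c, b`, then `ρ'_a(I) ≤ c/b`. -/
theorem statement2 {k : Type*} [Field k] [IsAlgClosed k] {N : ℕ}
    (I : Ideal (MvPolynomial (Fin (N + 1)) k))
    (hI0 : I ≠ ⊥) (hI1 : I ≠ ⊤) (hhom : IsHomogIdeal I)
    (c b : ℕ) (hc : 0 < c) (hb : 0 < b)
    (hpow : ∀ m : ℕ, 1 ≤ m → symbolicPower I (c * m) = (symbolicPower I c) ^ m)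
    (hcb : symbolicPower I c ≤ I ^ b) :
    asymResurgence' I (symbolicPower I) ≤ (c : ℝ) / b := by
  set f := resurgenceFrom I (symbolicPower I) with hf
  -- comparison function
  set v : ℕ → ℝ := fun t => (c : ℝ) * t / ((b : ℝ) * t - b * c + c) with hv
  have hbR : (0:ℝ) < b := by exact_mod_cast hb
  have hcR : (0:ℝ) < c := by exact_mod_cast hc
  -- v tends to c / b
  have hvtend : Tendsto v atTop (nhds ((c : ℝ) / b)) := by
    have h0 : Tendsto (fun t : ℕ => ((b:ℝ) * c - c) / t) atTop (nhds 0) :=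
      tendsto_const_div_atTop_nhds_zero_nat _
    have hden : Tendsto (fun t : ℕ => (b:ℝ) - ((b:ℝ) * c - c) / t) atTop (nhds ((b:ℝ) - 0)) :=
      tendsto_const_nhds.sub h0
    have hw : Tendsto (fun t : ℕ => (c:ℝ) / ((b:ℝ) - ((b:ℝ) * c - c) / t)) atTop
        (nhds ((c:ℝ) / ((b:ℝ) - 0))) :=
      tendsto_const_nhds.div hden (by simpa using hbR.ne')
    rw [sub_zero] at hw
    refine hw.congr' ?_
    filter_upwards [eventually_ge_atTop (c + 1)] with t ht
    have h1 : 0 < t := by omega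
    have htR : (0:ℝ) < t := by exact_mod_cast h1
    show (c:ℝ) / ((b:ℝ) - ((b:ℝ) * c - c) / t) = v t
    have hX : (b:ℝ) - ((b:ℝ) * c - c) / t = ((b:ℝ) * t - (b:ℝ) * c + c) / t := by
      field_simp
      ring
    rw [hX, div_div_eq_mul_div]
  have hvbdd : IsBoundedUnder (· ≤ ·) atTop v := hvtend.isBoundedUnder_le
  -- f is eventually ≤ v
  have hfv : f ≤ᶠ[atTop] v := by
    filter_upwards [eventually_ge_atTop (c + 1)] with t ht
    have hdpos : (0:ℝ) < (b:ℝ) * t - b * c + c := by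
      have : (c:ℝ) + 1 ≤ t := by exact_mod_cast ht
      nlinarith
    refine Real.sSup_le ?_ (by positivity)
    rintro x ⟨m, r, hm, hr, htm, htr, hns, rfl⟩
    -- the ideal-theoretic bound: b * (m / c) < r
    set q := m / c with hq
    have hq1 : 1 ≤ q := (Nat.one_le_div_iff hc).2 (le_trans (Nat.le_add_right c 1) (ht.trans htm))
    have hcq : c * q ≤ m := by
      rw [hq]; exact Nat.mul_div_le m c
    have hmq : m ≤ c * q + c := by
      have h1 : c * q + m % c = m := by rw [hq]; exact Nat.div_add_mod m c
      have h2 := Nat.mod_lt m hc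
      omega
    have hchain : symbolicPower I m ≤ I ^ (b * q) := by
      calc symbolicPower I m ≤ symbolicPower I (c * q) := symbolicPower_anti I hcq
        _ = (symbolicPower I c) ^ q := hpow q hq1
        _ ≤ (I ^ b) ^ q := Ideal.pow_right_mono hcb q
        _ = I ^ (b * q) := (pow_mul I b q).symm
    have hrq : b * q + 1 ≤ r := by
      by_contra h
      push_neg at h
      exact hns (hchain.trans (Ideal.pow_le_pow_right (by omega)))
    -- numeric
    obtain ⟨d, rfl⟩ := Nat.exists_eq_add_of_le (le_trans (Nat.le_add_right c 1) ht : c ≤ t)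
    have hkey := key_nat b c d m q r hb htm hmq hrq
    have hkeyR : (m : ℝ) * ((b:ℝ) * d + c) ≤ (c:ℝ) * ((c:ℝ) + d) * r := by exact_mod_cast hkey
    have hrR : (0:ℝ) < r := by exact_mod_cast hr
    rw [hv]
    rw [div_le_div_iff₀ hrR hdpos]
    push_cast
    clear hns hchain
    nlinarith [hkeyR]
  -- cobounded: f ≥ 0 (each element of the set is nonneg, sSup of such is ≥ 0)
  have hf0 : ∀ t, 0 ≤ f t := by
    intro t
    refine Real.sSup_nonneg ?_
    rintro x ⟨m, r, hm, hr, _, _, _, rfl⟩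
    positivity
  have hcob : IsCoboundedUnder (· ≤ ·) atTop f :=
    isCoboundedUnder_le_of_le atTop hf0
  calc asymResurgence' I (symbolicPower I) = limsup f atTop := rfl
    _ ≤ limsup v atTop := limsup_le_limsup hfv hcob hvbdd
    _ = (c : ℝ) / b := hvtend.limsup_eq
end

section
/- Let k be an algebraically closed field, R = k[x_0,...,x_N], and let I be a homogeneous ideal with (0) ≠ I ⊊ R. Suppose there are positive integers c and b such that I^(cm) = (I^(c))^m for all m ≥ 1 and I^(c) ⊆ I^b. Then for all positive integers m and r with r ≤ mb/c − b, one has I^(m) ⊆ I^r. -/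
open MvPolynomial Filter

/-!
With `t = ⌊m / c⌋` one has `I^(m) ⊆ I^(ct) = (I^(c))^t ⊆ I^(bt)`, and the numerical hypothesis
`r ≤ mb/c − b` forces `r ≤ bt` (and hence `t ≥ 1`, since `r > 0`).
-/

theorem Nat.le_mul_div_of_cast_le_mul_div_sub {m r b c : ℕ}
    (h : (r : ℝ) ≤ m * b / c - b) : r ≤ b * (m / c) := by
  rcases Nat.eq_zero_or_pos c with rfl | hc
  · simp only [Nat.cast_zero, div_zero, zero_sub] at h
    have : r = 0 := by
      exact_mod_cast le_antisymm (h.trans (neg_nonpos.mpr b.cast_nonneg)) r.cast_nonneg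
    omega
  have hcR : (0 : ℝ) < c := by exact_mod_cast hc
  have hrc : (r + b) * c ≤ m * b := by
    have : ((r : ℝ) + b) * c ≤ m * b := by rw [← le_div_iff₀ hcR]; linarith
    exact_mod_cast this
  have hm : m ≤ c * (m / c + 1) := (Nat.lt_mul_div_succ m hc).le
  have : (r + b) * c ≤ (b * (m / c) + b) * c := calc
    (r + b) * c ≤ m * b := hrc
    _ ≤ c * (m / c + 1) * b := Nat.mul_le_mul_right b hm
    _ = (b * (m / c) + b) * c := by ring
  have := Nat.le_of_mul_le_mul_right this hc
  omega

theorem symbolicPower_antitone {R : Type*} [CommRing R] (I : Ideal R) :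
    Antitone (symbolicPower I) :=
  fun _ _ h => iInf_mono fun _ => Ideal.comap_mono (Ideal.map_mono (Ideal.pow_le_pow_right h))

theorem statement3_general {k : Type*} [Field k] {N : ℕ}
    (I : Ideal (MvPolynomial (Fin (N + 1)) k))
    (c b : ℕ)
    (hpow : ∀ m : ℕ, 1 ≤ m → symbolicPower I (c * m) = (symbolicPower I c) ^ m)
    (hcb : symbolicPower I c ≤ I ^ b) :
    ∀ m r : ℕ, 0 < m → 0 < r → (r : ℝ) ≤ (m : ℝ) * b / c - b →
      symbolicPower I m ≤ I ^ r := by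
  intro m r _ hr hreal
  have hrt : r ≤ b * (m / c) := Nat.le_mul_div_of_cast_le_mul_div_sub hreal
  have ht : 1 ≤ m / c := Nat.pos_of_ne_zero fun h => by rw [h, mul_zero] at hrt; omega
  calc symbolicPower I m ≤ symbolicPower I (c * (m / c)) :=
        symbolicPower_antitone I (Nat.mul_div_le m c)
    _ = (symbolicPower I c) ^ (m / c) := hpow _ ht
    _ ≤ (I ^ b) ^ (m / c) := Ideal.pow_right_mono hcb _
    _ = I ^ (b * (m / c)) := (pow_mul I b _).symm
    _ ≤ I ^ r := Ideal.pow_le_pow_right hrt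

/-- If `I^(cm) = (I^(c))^m` for all `m ≥ 1` and `I^(c) ⊆ I^b` for positive integers `c, b`,
then `I^(m) ⊆ I^r` for all positive integers `m, r` with `r ≤ mb/c − b`. -/
theorem statement3 {k : Type*} [Field k] [IsAlgClosed k] {N : ℕ}
    (I : Ideal (MvPolynomial (Fin (N + 1)) k))
    (hI0 : I ≠ ⊥) (hI1 : I ≠ ⊤) (hhom : IsHomogIdeal I)
    (c b : ℕ) (hc : 0 < c) (hb : 0 < b)
    (hpow : ∀ m : ℕ, 1 ≤ m → symbolicPower I (c * m) = (symbolicPower I c) ^ m)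
    (hcb : symbolicPower I c ≤ I ^ b) :
    ∀ m r : ℕ, 0 < m → 0 < r → (r : ℝ) ≤ (m : ℝ) * b / c - b →
      symbolicPower I m ≤ I ^ r :=
  statement3_general I c b hpow hcb
end

section
/- Let k be an algebraically closed field, R = k[x_0,...,x_N], and let I be a homogeneous ideal with (0) ≠ I ⊊ R. If m and r are positive integers with m/r < ρ_a(I), then I^(mt) ⊄ I^{rt} for infinitely many positive integers t. -/
open MvPolynomial Filter

lemma sp_anti {R : Type*} [CommRing R] (I : Ideal R) {a b : ℕ} (h : a ≤ b) :
    symbolicPower I b ≤ symbolicPower I a := by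
  unfold symbolicPower
  exact iInf_mono fun P => Ideal.comap_mono (Ideal.map_mono (Ideal.pow_le_pow_right h))

lemma ceil_ex (a b : ℕ) (hb : 0 < b) : ∃ s, a ≤ b * s ∧ b * s < a + b := by
  refine ⟨(a + b - 1) / b, ?_⟩
  have hq := Nat.div_add_mod (a + b - 1) b
  have hr2 := Nat.mod_lt (a + b - 1) hb
  revert hq hr2
  generalize (a + b - 1) % b = r2
  generalize b * ((a + b - 1) / b) = X
  omega

/-- If `m/r < ρ_a(I)`, then `I^(mt) ⊄ I^{rt}` for infinitely many positive integers `t`. -/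
theorem statement6 {k : Type*} [Field k] [IsAlgClosed k] {N : ℕ}
    (I : Ideal (MvPolynomial (Fin (N + 1)) k))
    (hI0 : I ≠ ⊥) (hI1 : I ≠ ⊤) (hhom : IsHomogIdeal I)
    (m r : ℕ) (hm : 0 < m) (hr : 0 < r)
    (hlt : (m : ℝ) / r < asymResurgence I (symbolicPower I)) :
    ∃ᶠ t : ℕ in atTop, ¬ symbolicPower I (m * t) ≤ I ^ (r * t) := by
  set Sset := {x : ℝ | ∃ m r : ℕ, 0 < m ∧ 0 < r ∧
    (∀ᶠ t : ℕ in atTop, ¬ symbolicPower I (m * t) ≤ I ^ (r * t)) ∧ x = (m : ℝ) / r} with hSset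
  have hne : Sset.Nonempty := by
    by_contra h
    rw [Set.not_nonempty_iff_eq_empty] at h
    have : asymResurgence I (symbolicPower I) = 0 := by
      rw [asymResurgence, ← hSset, h, Real.sSup_empty]
    rw [this] at hlt
    have h0 : (0:ℝ) ≤ (m : ℝ) / r := by positivity
    linarith
  obtain ⟨x, hx, hmx⟩ := exists_lt_of_lt_csSup hne hlt
  obtain ⟨m', r', hm', hr', hev, rfl⟩ := hx
  have hkey : m * r' < m' * r := by
    have h1 : (m : ℝ) * r' < m' * r := by
      rw [div_lt_div_iff₀ (by exact_mod_cast hr) (by exact_mod_cast hr')] at hmx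
      exact hmx
    exact_mod_cast h1
  rw [eventually_atTop] at hev
  obtain ⟨S, hS⟩ := hev
  rw [frequently_atTop]
  intro T
  set t := T + m' * S + m' * r' with ht
  obtain ⟨s, hs1, hs2⟩ := ceil_ex (m * t) m' hm'
  have hsS : S ≤ s := by
    have h1 : m' * S ≤ t := by omega
    have h2 : t ≤ m * t := Nat.le_mul_of_pos_left t hm
    have : m' * S ≤ m' * s := le_trans h1 (le_trans h2 hs1)
    exact Nat.le_of_mul_le_mul_left this hm'
  have hrs : r' * s ≤ r * t := by
    have e1 : r' * (m' * s + 1) ≤ r' * (m * t + m') := Nat.mul_le_mul_left r' hs2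
    have e2 : m' * r' ≤ t := Nat.le_add_left _ _
    have e3 : (m * r' + 1) * t ≤ (m' * r) * t := Nat.mul_le_mul_right t hkey
    have h4 : m' * (r' * s) ≤ m' * (r * t) := by nlinarith [e1, e2, e3]
    exact Nat.le_of_mul_le_mul_left h4 hm'
  refine ⟨t, by omega, fun hcon => hS s hsS ?_⟩
  exact le_trans (sp_anti I hs1) (le_trans hcon (Ideal.pow_le_pow_right hrs))
end

section
/- Let k be a field, let s ≥ 2, and in R = k[x_0,...,x_{2s−1}] let L_1,...,L_s be the pairwise disjoint coordinate lines of P^{2s−1} with I(L_i) = (x_j : 0 ≤ j ≤ 2s−1, j ∉ {2i−2, 2i−1}), and set I^(m) = I(L_1)^m ∩ ... ∩ I(L_s)^m. Then for every positive integer m, α(I^(m)) ≥ sm/(s−1). -/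
open MvPolynomial Filter

/-- The ideal of the `i`-th coordinate line in `P^{2s−1}` (written with 0-indexed
coordinates): the ideal generated by all the variables `x_j` with `j ∉ {2i, 2i+1}`. -/
noncomputable def coordLineIdeal (k : Type*) [Field k] (s : ℕ) (i : Fin s) :
    Ideal (MvPolynomial (Fin (2 * s)) k) :=
  Ideal.span (MvPolynomial.X ''
    {j : Fin (2 * s) | (j : ℕ) ≠ 2 * (i : ℕ) ∧ (j : ℕ) ≠ 2 * (i : ℕ) + 1})

/-- The `m`-th symbolic power `I^(m) = I(L_1)^m ∩ … ∩ I(L_s)^m` of the ideal of the union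
of the `s` disjoint coordinate lines of `P^{2s−1}`. -/
noncomputable def coordLinesSymb (k : Type*) [Field k] (s : ℕ) (m : ℕ) :
    Ideal (MvPolynomial (Fin (2 * s)) k) :=
  ⨅ i : Fin s, coordLineIdeal k s i ^ m


section Aux
open Finset
variable {k : Type*} [Field k] {s : ℕ}

variable {k : Type*} [Field k] {s : ℕ}

/-- weight: sum of exponents of variables outside line i -/
def wtF (s : ℕ) (i : Fin s) (a : Fin (2*s) →₀ ℕ) : ℕ :=
  ∑ j : Fin (2*s), if (j : ℕ) ≠ 2 * (i : ℕ) ∧ (j : ℕ) ≠ 2 * (i : ℕ) + 1 then a j else 0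

lemma wtF_add (i : Fin s) (a b : Fin (2*s) →₀ ℕ) :
    wtF s i (a + b) = wtF s i a + wtF s i b := by
  unfold wtF
  rw [← Finset.sum_add_distrib]
  refine Finset.sum_congr rfl fun j _ => ?_
  by_cases h : (j : ℕ) ≠ 2 * (i : ℕ) ∧ (j : ℕ) ≠ 2 * (i : ℕ) + 1 <;> simp [h]

def Jid (k : Type*) [Field k] (s : ℕ) (i : Fin s) (m : ℕ) :
    Ideal (MvPolynomial (Fin (2*s)) k) where
  carrier := {f | ∀ a ∈ f.support, m ≤ wtF s i a}
  zero_mem' := by simp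
  add_mem' := by
    intro f g hf hg a ha
    classical
    rcases Finset.mem_union.mp (MvPolynomial.support_add ha) with h | h
    · exact hf a h
    · exact hg a h
  smul_mem' := by
    intro c f hf a ha
    classical
    rw [smul_eq_mul] at ha
    obtain ⟨b, hb, d, hd, rfl⟩ := Finset.mem_add.mp (MvPolynomial.support_mul c f ha)
    calc m ≤ wtF s i d := hf d hd
    _ ≤ wtF s i b + wtF s i d := Nat.le_add_left _ _
    _ = wtF s i (b + d) := (wtF_add i b d).symm

lemma Jid_mul (i : Fin s) {p q : ℕ} {f g : MvPolynomial (Fin (2*s)) k}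
    (hf : f ∈ Jid k s i p) (hg : g ∈ Jid k s i q) : f * g ∈ Jid k s i (p + q) := by
  intro a ha
  classical
  obtain ⟨b, hb, d, hd, rfl⟩ := Finset.mem_add.mp (MvPolynomial.support_mul f g ha)
  rw [wtF_add]
  exact Nat.add_le_add (hf b hb) (hg d hd)

lemma coordLine_le (i : Fin s) :
    coordLineIdeal k s i ≤ Jid k s i 1 := by
  rw [coordLineIdeal, Ideal.span_le]
  rintro _ ⟨j, hj, rfl⟩
  intro a ha
  rw [MvPolynomial.support_X, Finset.mem_singleton] at ha
  subst ha
  unfold wtF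
  rw [Finset.sum_eq_single j]
  · simp [hj.1, hj.2]
  · intro j' _ hj'
    simp [Finsupp.single_apply, Ne.symm hj']
  · simp

lemma pow_le_Jid (i : Fin s) (m : ℕ) :
    coordLineIdeal k s i ^ m ≤ Jid k s i m := by
  induction m with
  | zero => intro f _ a _; exact Nat.zero_le _
  | succ n ih =>
    rw [pow_succ]
    refine Ideal.mul_le.mpr fun r hr t ht => ?_
    exact Jid_mul i (ih hr) (coordLine_le i ht)

lemma sum_wtF_aux {s : ℕ} (j : Fin (2*s)) (c : ℕ) :
    ∑ i : Fin s, (if (j : ℕ) ≠ 2 * (i : ℕ) ∧ (j : ℕ) ≠ 2 * (i : ℕ) + 1 then c else 0)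
      = (s - 1) * c := by
  have hjl := j.isLt
  have hj2 : (j : ℕ) / 2 < s := by omega
  set i0 : Fin s := ⟨(j : ℕ) / 2, hj2⟩ with hi0
  have key : ∀ i : Fin s, ((j : ℕ) ≠ 2 * (i : ℕ) ∧ (j : ℕ) ≠ 2 * (i : ℕ) + 1) ↔ i ≠ i0 := by
    intro i
    simp only [Ne, Fin.ext_iff, hi0]
    omega
  calc ∑ i : Fin s, (if (j : ℕ) ≠ 2 * (i : ℕ) ∧ (j : ℕ) ≠ 2 * (i : ℕ) + 1 then c else 0)
      = ∑ i : Fin s, (if i ≠ i0 then c else 0) := by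
        refine Finset.sum_congr rfl fun i _ => ?_
        simp only [key i]
    _ = ∑ i ∈ Finset.univ.filter (· ≠ i0), c := (Finset.sum_filter _ _).symm
    _ = (s - 1) * c := by
        rw [Finset.filter_ne', Finset.sum_const, smul_eq_mul,
          Finset.card_erase_of_mem (Finset.mem_univ _), Finset.card_univ, Fintype.card_fin]

lemma sum_wtF {s : ℕ} (a : Fin (2*s) →₀ ℕ) :
    ∑ i : Fin s, wtF s i a = (s - 1) * ∑ j : Fin (2*s), a j := by
  unfold wtF
  rw [Finset.sum_comm, Finset.mul_sum]
  exact Finset.sum_congr rfl fun j _ => sum_wtF_aux j (a j)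

/-- the first coordinate of line `i` -/
def vIdx {s : ℕ} (i : Fin s) : Fin (2*s) := ⟨2 * (i : ℕ), by have := i.isLt; omega⟩

lemma witness_mem (hs : 2 ≤ s) (m : ℕ) :
    (∏ i : Fin s, (X (vIdx i) : MvPolynomial (Fin (2*s)) k) ^ m) ∈ coordLinesSymb k s m := by
  rw [coordLinesSymb, Ideal.mem_iInf]
  intro i
  have : ∃ i' : Fin s, i' ≠ i := by
    refine ⟨if h : (i : ℕ) = 0 then ⟨1, by omega⟩ else ⟨0, by omega⟩, ?_⟩
    split
    · next h => simp only [Ne, Fin.ext_iff]; omega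
    · next h => simp only [Ne, Fin.ext_iff]; omega
  obtain ⟨i', hi'⟩ := this
  have hXmem : (X (vIdx i') : MvPolynomial (Fin (2*s)) k) ∈ coordLineIdeal k s i := by
    apply Ideal.subset_span
    refine ⟨vIdx i', ⟨?_, ?_⟩, rfl⟩ <;>
    · show (2 * (i' : ℕ)) ≠ _
      have : (i' : ℕ) ≠ (i : ℕ) := fun h => hi' (Fin.ext h)
      omega
  rw [← Finset.mul_prod_erase Finset.univ _ (Finset.mem_univ i')]
  exact Ideal.mul_mem_right _ _ (Ideal.pow_mem_pow hXmem m)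

lemma witness_ne_zero (m : ℕ) :
    (∏ i : Fin s, (X (vIdx i) : MvPolynomial (Fin (2*s)) k) ^ m) ≠ 0 := by
  refine Finset.prod_ne_zero_iff.mpr fun i _ => pow_ne_zero m (X_ne_zero _)

end Aux

/-- For the `s ≥ 2` disjoint coordinate lines of `P^{2s−1}`:
`α(I^(m)) ≥ sm/(s−1)` for every positive integer `m`. -/
theorem statement11 {k : Type*} [Field k] {s : ℕ} (hs : 2 ≤ s) :
    ∀ m : ℕ, 0 < m →
      (s : ℝ) * m / ((s : ℝ) - 1) ≤ (alphaDeg (coordLinesSymb k s m) : ℝ) := by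
  intro m hm
  classical
  -- the set defining alphaDeg is nonempty
  set T : Set ℕ := {d | ∃ f ∈ coordLinesSymb k s m, f ≠ 0 ∧ f.totalDegree = d} with hT
  have hTne : T.Nonempty :=
    ⟨_, ∏ i : Fin s, (X (vIdx i) : MvPolynomial (Fin (2*s)) k) ^ m,
      witness_mem hs m, witness_ne_zero m, rfl⟩
  have hmem : alphaDeg (coordLinesSymb k s m) ∈ T := Nat.sInf_mem hTne
  obtain ⟨f, hfI, hfne, hdeg⟩ := hmem
  obtain ⟨a, ha⟩ := MvPolynomial.support_nonempty.mpr hfne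
  -- each weight is at least m
  have hwt : ∀ i : Fin s, m ≤ wtF s i a := by
    intro i
    have hfi : f ∈ coordLineIdeal k s i ^ m := Ideal.mem_iInf.mp hfI i
    exact pow_le_Jid i m hfi a ha
  -- total degree bound
  have hdega : (∑ j : Fin (2*s), a j) ≤ f.totalDegree := by
    have h1 : (a.sum fun _ e => e) ≤ f.totalDegree := MvPolynomial.le_totalDegree ha
    have h2 : (a.sum fun _ e => e) = ∑ j : Fin (2*s), a j := by
      rw [Finsupp.sum]
      exact Finset.sum_subset (Finset.subset_univ _)
        (fun j _ hj => Finsupp.notMem_support_iff.mp hj)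
    rwa [h2] at h1
  have hnat : s * m ≤ (s - 1) * alphaDeg (coordLinesSymb k s m) := by
    calc s * m = ∑ _i : Fin s, m := by rw [Finset.sum_const, smul_eq_mul, Finset.card_univ,
          Fintype.card_fin]
    _ ≤ ∑ i : Fin s, wtF s i a := Finset.sum_le_sum fun i _ => hwt i
    _ = (s - 1) * ∑ j : Fin (2*s), a j := sum_wtF a
    _ ≤ (s - 1) * f.totalDegree := Nat.mul_le_mul_left _ hdega
    _ = (s - 1) * alphaDeg (coordLinesSymb k s m) := by rw [hdeg]
  have hs1 : (0:ℝ) < (s : ℝ) - 1 := by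
    have : (2:ℝ) ≤ (s:ℝ) := by exact_mod_cast hs
    linarith
  rw [div_le_iff₀ hs1]
  have hcast : ((s * m : ℕ) : ℝ) ≤ (((s - 1) * alphaDeg (coordLinesSymb k s m) : ℕ) : ℝ) :=
    Nat.cast_le.mpr hnat
  push_cast [Nat.cast_sub (by omega : 1 ≤ s)] at hcast
  linarith
end

section
/- Let k be a field, let s ≥ 2, and in R = k[x_0,...,x_{2s−1}] let L_1,...,L_s be the pairwise disjoint coordinate lines of P^{2s−1} with I(L_i) = (x_j : 0 ≤ j ≤ 2s−1, j ∉ {2i−2, 2i−1}), and set I^(m) = I(L_1)^m ∩ ... ∩ I(L_s)^m. Then for every even positive integer λ, the monomial (x_0x_1···x_{2s−1})^{λ/2} lies in I^(λ(s−1)) and α(I^(λ(s−1))) = λs; consequently γ(I) = s/(s−1). -/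
open MvPolynomial Filter

namespace Statement12Aux

variable {k : Type*} [CommSemiring k] {σ : Type*}

/-- weight of an exponent vector -/
noncomputable def wt (w : σ → ℕ) (a : σ →₀ ℕ) : ℕ := a.sum fun j n => n * w j

lemma wt_add (w : σ → ℕ) (a b : σ →₀ ℕ) : wt w (a + b) = wt w a + wt w b := by
  classical
  simpa [wt] using Finsupp.sum_add_index' (by simp) (fun j b c => add_mul b c (w j))

lemma wt_single (w : σ → ℕ) (j : σ) (n : ℕ) : wt w (Finsupp.single j n) = n * w j := by
  simp [wt, Finsupp.sum_single_index]

lemma wt_eq_sum [Fintype σ] (w : σ → ℕ) (a : σ →₀ ℕ) : wt w a = ∑ j, a j * w j :=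
  Finsupp.sum_fintype _ _ (by simp)

/-- ideal of polynomials all of whose monomials have weight at least m -/
def Kideal (w : σ → ℕ) (m : ℕ) : Ideal (MvPolynomial σ k) where
  carrier := {f | ∀ a ∈ f.support, m ≤ wt w a}
  zero_mem' := by simp
  add_mem' := by
    classical
    intro f g hf hg a ha
    rcases Finset.mem_union.mp (MvPolynomial.support_add ha) with h | h
    exacts [hf a h, hg a h]
  smul_mem' := by
    classical
    intro p f hf a ha
    rw [smul_eq_mul] at ha
    obtain ⟨b, _, c, hc, rfl⟩ := Finset.mem_add.mp (MvPolynomial.support_mul _ _ ha)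
    have := hf c hc
    rw [wt_add]; omega

lemma Kideal_mul_le (w : σ → ℕ) (m n : ℕ) :
    Kideal (k := k) w m * Kideal w n ≤ Kideal w (m + n) := by
  classical
  rw [Ideal.mul_le]
  intro f hf g hg a ha
  obtain ⟨b, hb, c, hc, rfl⟩ := Finset.mem_add.mp (MvPolynomial.support_mul _ _ ha)
  rw [wt_add]
  exact add_le_add (hf b hb) (hg c hc)

lemma span_pow_le_Kideal [Nontrivial k] (w : σ → ℕ) (S : Set σ) (hw : ∀ j ∈ S, 1 ≤ w j)
    (m : ℕ) : Ideal.span (MvPolynomial.X '' S) ^ m ≤ Kideal (k := k) w m := by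
  induction m with
  | zero => intro f _ a _; exact Nat.zero_le _
  | succ n ih =>
      rw [pow_succ]
      refine le_trans (mul_le_mul' ih ?_) (Kideal_mul_le w n 1)
      rw [Ideal.span_le]
      rintro _ ⟨j, hj, rfl⟩ a ha
      rw [MvPolynomial.support_X, Finset.mem_singleton] at ha
      subst ha
      rw [wt_single, one_mul]
      exact hw j hj

lemma prod_pow_mem (J : Ideal (MvPolynomial σ k)) (t : Finset σ)
    (h : ∀ j ∈ t, MvPolynomial.X j ∈ J) (c : ℕ) :
    (∏ j ∈ t, MvPolynomial.X j ^ c) ∈ J ^ (t.card * c) := by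
  classical
  induction t using Finset.induction with
  | empty => simp [Ideal.one_eq_top]
  | @insert a t hat ih =>
      rw [Finset.prod_insert hat, Finset.card_insert_of_notMem hat, add_mul, one_mul,
        add_comm, pow_add]
      exact Ideal.mul_mem_mul (Ideal.pow_mem_pow (h a (Finset.mem_insert_self a t)) c)
        (ih fun j hj => h j (Finset.mem_insert_of_mem hj))

lemma prod_X_pow_eq (t : Finset σ) (c : ℕ) :
    (∏ j ∈ t, (MvPolynomial.X j : MvPolynomial σ k) ^ c)
      = MvPolynomial.monomial (∑ j ∈ t, Finsupp.single j c) 1 := by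
  classical
  induction t using Finset.induction with
  | empty => simp
  | @insert a t hat ih =>
      rw [Finset.prod_insert hat, Finset.sum_insert hat, ih, X_pow_eq_monomial,
        monomial_mul, one_mul]

end Statement12Aux

open Statement12Aux in
/-- For the `s ≥ 2` disjoint coordinate lines of `P^{2s−1}`: for every even positive
integer `l`, the monomial `(x_0 x_1 ⋯ x_{2s−1})^{l/2}` lies in `I^(l(s−1))` and
`α(I^(l(s−1))) = l s`; consequently `γ(I) = s/(s−1)`. -/
theorem statement12 {k : Type*} [Field k] {s : ℕ} (hs : 2 ≤ s)
    (γ : ℝ)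
    (hγ : Tendsto (fun m : ℕ => (alphaDeg (coordLinesSymb k s m) : ℝ) / m) atTop (nhds γ)) :
    (∀ l : ℕ, 0 < l → Even l →
      (∏ j : Fin (2 * s), MvPolynomial.X j ^ (l / 2)) ∈ coordLinesSymb k s (l * (s - 1)) ∧
      alphaDeg (coordLinesSymb k s (l * (s - 1))) = l * s) ∧
    γ = (s : ℝ) / ((s : ℝ) - 1) := by
  classical
  -- weights
  set w : Fin s → Fin (2 * s) → ℕ := fun i j =>
    if (j : ℕ) ≠ 2 * (i : ℕ) ∧ (j : ℕ) ≠ 2 * (i : ℕ) + 1 then 1 else 0 with hw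
  have hsumw : ∀ j : Fin (2 * s), ∑ i : Fin s, w i j = s - 1 := by
    intro j
    have hfilt : (Finset.univ.filter fun i : Fin s =>
        (j : ℕ) ≠ 2 * (i : ℕ) ∧ (j : ℕ) ≠ 2 * (i : ℕ) + 1)
        = ({⟨(j : ℕ) / 2, by have := j.isLt; omega⟩} : Finset (Fin s))ᶜ := by
      ext i
      simp only [Finset.mem_filter, Finset.mem_univ, true_and, Finset.mem_compl,
        Finset.mem_singleton, Fin.ext_iff]
      omega
    calc ∑ i : Fin s, w i j
        = ∑ i ∈ (Finset.univ.filter fun i : Fin s =>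
            (j : ℕ) ≠ 2 * (i : ℕ) ∧ (j : ℕ) ≠ 2 * (i : ℕ) + 1), 1 := by
          rw [Finset.sum_filter]
      _ = s - 1 := by
          rw [hfilt, Finset.sum_const, smul_eq_mul, mul_one, Finset.card_compl,
            Finset.card_singleton, Fintype.card_fin]
  have hlow : ∀ m : ℕ, ∀ f ∈ coordLinesSymb k s m, ∀ a ∈ f.support,
      s * m ≤ (∑ j, a j) * (s - 1) := by
    intro m f hf a ha
    have h1 : ∀ i : Fin s, m ≤ wt (w i) a := by
      intro i
      have hfm : f ∈ coordLineIdeal k s i ^ m := (Submodule.mem_iInf _).mp hf i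
      refine span_pow_le_Kideal (w i)
        {j : Fin (2 * s) | (j : ℕ) ≠ 2 * (i : ℕ) ∧ (j : ℕ) ≠ 2 * (i : ℕ) + 1}
        (fun j hj => by
          have hj' : (j : ℕ) ≠ 2 * (i : ℕ) ∧ (j : ℕ) ≠ 2 * (i : ℕ) + 1 := hj
          simp only [hw]; rw [if_pos hj']) m hfm a ha
    have h2 : s * m ≤ ∑ i : Fin s, wt (w i) a := by
      calc s * m = ∑ _i : Fin s, m := by
            rw [Finset.sum_const, Finset.card_univ, Fintype.card_fin, smul_eq_mul]
        _ ≤ _ := Finset.sum_le_sum fun i _ => h1 i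
    calc s * m ≤ ∑ i : Fin s, wt (w i) a := h2
      _ = ∑ i : Fin s, ∑ j, a j * w i j := by simp_rw [wt_eq_sum]
      _ = ∑ j, ∑ i : Fin s, a j * w i j := Finset.sum_comm
      _ = ∑ j, a j * (s - 1) := by
          refine Finset.sum_congr rfl fun j _ => ?_
          rw [← Finset.mul_sum, hsumw]
      _ = (∑ j, a j) * (s - 1) := by rw [Finset.sum_mul]
  have key : ∀ l : ℕ, 0 < l → Even l →
      (∏ j : Fin (2 * s), MvPolynomial.X j ^ (l / 2)) ∈ coordLinesSymb k s (l * (s - 1)) ∧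
      alphaDeg (coordLinesSymb k s (l * (s - 1))) = l * s := by
    intro l hl hle
    obtain ⟨c, rfl⟩ := hle
    have hc : 0 < c := by omega
    have hdiv : (c + c) / 2 = c := by omega
    rw [hdiv]
    set m := (c + c) * (s - 1) with hm
    set M := ∏ j : Fin (2 * s), (MvPolynomial.X j : MvPolynomial (Fin (2 * s)) k) ^ c with hM
    -- membership
    have hmem : M ∈ coordLinesSymb k s m := by
      rw [coordLinesSymb]
      refine (Submodule.mem_iInf _).mpr fun i => ?_
      set T : Finset (Fin (2 * s)) := Finset.univ.filter fun j =>
        (j : ℕ) ≠ 2 * (i : ℕ) ∧ (j : ℕ) ≠ 2 * (i : ℕ) + 1 with hT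
    -- card of T
      have hi := i.isLt
      have hTc : T = ({⟨2 * (i : ℕ), by omega⟩, ⟨2 * (i : ℕ) + 1, by omega⟩}
          : Finset (Fin (2 * s)))ᶜ := by
        ext j
        simp only [hT, Finset.mem_filter, Finset.mem_univ, true_and, Finset.mem_compl,
          Finset.mem_insert, Finset.mem_singleton, Fin.ext_iff]
        omega
      have hcard : T.card = 2 * s - 2 := by
        rw [hTc, Finset.card_compl, Fintype.card_fin]
        have : ({⟨2 * (i : ℕ), by omega⟩, ⟨2 * (i : ℕ) + 1, by omega⟩}
            : Finset (Fin (2 * s))).card = 2 := by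
          rw [Finset.card_insert_of_notMem, Finset.card_singleton]
          simp only [Finset.mem_singleton, Fin.ext_iff]
          omega
        omega
      have h5 : (∏ j ∈ T, (MvPolynomial.X j : MvPolynomial (Fin (2 * s)) k) ^ c)
          ∈ coordLineIdeal k s i ^ (T.card * c) := by
        refine prod_pow_mem _ _ (fun j hj => ?_) c
        have hj' : (j : ℕ) ≠ 2 * (i : ℕ) ∧ (j : ℕ) ≠ 2 * (i : ℕ) + 1 := by
          simpa [hT] using hj
        exact Ideal.subset_span ⟨j, hj', rfl⟩
      rw [hcard] at h5
      have hpow : (2 * s - 2) * c = m := by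
        have h2s : 2 * s - 2 = 2 * (s - 1) := by omega
        rw [h2s, hm]; ring
      rw [hpow] at h5
      have hsplit : M = (∏ j ∈ T, (MvPolynomial.X j : MvPolynomial (Fin (2 * s)) k) ^ c)
          * ∏ j ∈ Tᶜ, (MvPolynomial.X j : MvPolynomial (Fin (2 * s)) k) ^ c :=
        (Finset.prod_mul_prod_compl T _).symm
      rw [hsplit]
      exact Ideal.mul_mem_right _ _ h5
    -- total degree of M
    have hMeq : M = MvPolynomial.monomial (∑ j : Fin (2 * s), Finsupp.single j c)
        (1 : k) := prod_X_pow_eq Finset.univ c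
    have hMne : M ≠ 0 := by
      rw [hMeq]
      simp [MvPolynomial.monomial_eq_zero]
    have hD : ∀ j' : Fin (2 * s), (∑ j : Fin (2 * s), Finsupp.single j c) j' = c := by
      intro j'
      rw [Finsupp.finset_sum_apply]
      simp [Finsupp.single_apply]
    have hMdeg : M.totalDegree = (c + c) * s := by
      rw [hMeq, MvPolynomial.totalDegree_monomial _ (one_ne_zero)]
      rw [Finsupp.sum_fintype _ _ (fun _ => rfl)]
      calc ∑ j' : Fin (2 * s), (∑ j : Fin (2 * s), Finsupp.single j c) j'
          = ∑ _j' : Fin (2 * s), c := Finset.sum_congr rfl fun j' _ => hD j'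
        _ = 2 * s * c := by rw [Finset.sum_const, Finset.card_univ, Fintype.card_fin,
              smul_eq_mul]
        _ = (c + c) * s := by ring
    refine ⟨hmem, ?_⟩
    -- alphaDeg computation
    have hmemset : (c + c) * s ∈
        {d | ∃ f ∈ coordLinesSymb k s m, f ≠ 0 ∧ f.totalDegree = d} :=
      ⟨M, hmem, hMne, hMdeg⟩
    refine le_antisymm (Nat.sInf_le hmemset) (le_csInf ⟨_, hmemset⟩ ?_)
    rintro d ⟨f, hf, hf0, rfl⟩
    obtain ⟨a, ha⟩ := Finset.nonempty_iff_ne_empty.mpr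
      (fun h => hf0 (MvPolynomial.support_eq_empty.mp h))
    have h3 := hlow m f hf a ha
    have hdeg_le : (∑ j, a j) ≤ f.totalDegree := by
      have := MvPolynomial.le_totalDegree ha
      rwa [Finsupp.sum_fintype _ _ (fun _ => rfl)] at this
    have h4 : ((c + c) * s) * (s - 1) ≤ (∑ j, a j) * (s - 1) := by
      calc ((c + c) * s) * (s - 1) = s * m := by rw [hm]; ring
        _ ≤ _ := h3
    have h6 : (c + c) * s ≤ ∑ j, a j :=
      Nat.le_of_mul_le_mul_right h4 (by omega)
    omega
  refine ⟨key, ?_⟩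
  -- limit computation
  have htop : Tendsto (fun t : ℕ => 2 * (t + 1) * (s - 1)) atTop atTop := by
    apply tendsto_atTop_mono (f := id) (fun t => ?_) tendsto_id
    have h1 : t + 1 ≤ 2 * (t + 1) * 1 := by omega
    calc (t : ℕ) ≤ 2 * (t + 1) * 1 := by omega
      _ ≤ 2 * (t + 1) * (s - 1) := Nat.mul_le_mul_left _ (by omega)
  have hcomp : Tendsto (fun t : ℕ =>
      (alphaDeg (coordLinesSymb k s (2 * (t + 1) * (s - 1))) : ℝ)
        / ((2 * (t + 1) * (s - 1) : ℕ) : ℝ))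
      atTop (nhds γ) := hγ.comp htop
  have hconst : ∀ t : ℕ,
      (alphaDeg (coordLinesSymb k s (2 * (t + 1) * (s - 1))) : ℝ)
        / ((2 * (t + 1) * (s - 1) : ℕ) : ℝ)
        = (s : ℝ) / ((s : ℝ) - 1) := by
    intro t
    have hk := (key (2 * (t + 1)) (by omega) ⟨t + 1, by ring⟩).2
    rw [hk]
    have hs1 : ((s : ℝ) - 1) ≠ 0 := by
      have : (2 : ℝ) ≤ (s : ℝ) := by exact_mod_cast hs
      linarith
    have h1 : 1 ≤ s := by omega
    have ht0 : ((t : ℝ) + 1) ≠ 0 := by positivity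
    push_cast [Nat.cast_sub h1]
    field_simp
  have h7 : Tendsto (fun _t : ℕ => (s : ℝ) / ((s : ℝ) - 1)) atTop
      (nhds ((s : ℝ) / ((s : ℝ) - 1))) := tendsto_const_nhds
  have h8 : Tendsto (fun t : ℕ =>
      (alphaDeg (coordLinesSymb k s (2 * (t + 1) * (s - 1))) : ℝ)
        / ((2 * (t + 1) * (s - 1) : ℕ) : ℝ))
      atTop (nhds ((s : ℝ) / ((s : ℝ) - 1))) := by
    simpa only [hconst] using h7
  exact tendsto_nhds_unique hcomp h8
end

section
/- Let k be a field and s ≥ 2. In R = k[x_0,...,x_{2s−1}] let I = I(L_1) ∩ ... ∩ I(L_s) be the ideal of the s pairwise disjoint coordinate lines of P^{2s−1} with I(L_i) = (x_j : j ∉ {2i−2, 2i−1}), and let I^(m) = I(L_1)^m ∩ ... ∩ I(L_s)^m. In S = k[y_0,...,y_{s−1}] let J = J(p_0) ∩ ... ∩ J(p_{s−1}) be the ideal of the s coordinate points of P^{s−1}, where J(p_i) = (y_j : j ≠ i), and let J^(m) = J(p_0)^m ∩ ... ∩ J(p_{s−1})^m. Then for all positive integers m and r, I^(m) ⊆ I^r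 if and only if J^(m) ⊆ J^r; consequently ρ(I) = ρ(J). -/
open MvPolynomial Filter

/-- The ideal of the `i`-th coordinate point of `P^{s−1}`: generated by all variables
`y_j` with `j ≠ i`. -/
noncomputable def coordPointIdeal (k : Type*) [Field k] (s : ℕ) (i : Fin s) :
    Ideal (MvPolynomial (Fin s) k) :=
  Ideal.span (MvPolynomial.X '' {j : Fin s | j ≠ i})

/-!
Every ideal here is a monomial ideal, so it is determined by its set of exponent vectors, and
intersections, products and powers of such ideals become intersections, Minkowski sums and
iterated Minkowski sums of exponent sets. Merging each pair of variables `x_{2i}, x_{2i+1}` into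
`y_i`, i.e. pushing exponent vectors forward along `j ↦ ⌊j/2⌋`, exhibits the exponent set of each
ideal built from the lines as the preimage of the exponent set of the corresponding ideal built
from the points. Taking preimages under this pushforward commutes with Minkowski sums, because a
splitting of the image of a multiset lifts to a splitting of the multiset; since the pushforward
is surjective, a containment holds on one side exactly when it holds on the other.
-/

open scoped Pointwise

theorem Multiset.exists_add_of_map_eq_add {α β : Type*} (f : α → β) {s : Multiset α}
    {t u : Multiset β} (h : s.map f = t + u) :
    ∃ s₁ s₂, s = s₁ + s₂ ∧ s₁.map f = t ∧ s₂.map f = u := by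
  classical
  induction s using Multiset.induction_on generalizing t u with
  | empty =>
    obtain ⟨rfl, rfl⟩ := add_eq_zero.mp h.symm
    exact ⟨0, 0, by simp⟩
  | cons a s ih =>
    rw [Multiset.map_cons] at h
    rcases Multiset.mem_add.mp (h ▸ Multiset.mem_cons_self (f a) _) with ht | hu
    · obtain ⟨t, rfl⟩ := Multiset.exists_cons_of_mem ht
      rw [Multiset.cons_add, Multiset.cons_inj_right] at h
      obtain ⟨s₁, s₂, rfl, rfl, rfl⟩ := ih h
      exact ⟨a ::ₘ s₁, s₂, by simp⟩
    · obtain ⟨u, rfl⟩ := Multiset.exists_cons_of_mem hu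
      rw [Multiset.add_cons, Multiset.cons_inj_right] at h
      obtain ⟨s₁, s₂, rfl, rfl, rfl⟩ := ih h
      exact ⟨s₁, a ::ₘ s₂, by simp⟩

namespace Finsupp

variable {σ τ : Type*} (π : σ → τ)

theorem exists_add_of_mapDomain_eq_add {d : σ →₀ ℕ} {a b : τ →₀ ℕ}
    (h : d.mapDomain π = a + b) :
    ∃ d₁ d₂, d = d₁ + d₂ ∧ d₁.mapDomain π = a ∧ d₂.mapDomain π = b := by
  classical
  have hmap : (toMultiset d).map π = toMultiset a + toMultiset b := by
    rw [toMultiset_map, h, toMultiset_add]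
  obtain ⟨s₁, s₂, hd, h₁, h₂⟩ := Multiset.exists_add_of_map_eq_add π hmap
  refine ⟨Multiset.toFinsupp s₁, Multiset.toFinsupp s₂, ?_, ?_, ?_⟩ <;>
    apply Multiset.toFinsupp.symm.injective <;> simp [← toMultiset_map, hd, h₁, h₂]

theorem preimage_mapDomain_add (A B : Set (τ →₀ ℕ)) :
    mapDomain π ⁻¹' (A + B) = mapDomain π ⁻¹' A + mapDomain π ⁻¹' B := by
  refine subset_antisymm ?_ (Set.preimage_add_preimage_subset (mapDomain.addMonoidHom π))
  rintro d ⟨a, ha, b, hb, hab⟩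
  obtain ⟨d₁, d₂, rfl, rfl, rfl⟩ := exists_add_of_mapDomain_eq_add π hab.symm
  exact Set.add_mem_add ha hb

theorem preimage_mapDomain_nsmul (A : Set (τ →₀ ℕ)) {n : ℕ} (hn : n ≠ 0) :
    mapDomain π ⁻¹' (n • A) = n • mapDomain π ⁻¹' A := by
  obtain ⟨n, rfl⟩ := Nat.exists_eq_succ_of_ne_zero hn
  induction n with
  | zero => simp
  | succ n ih => rw [succ_nsmul, preimage_mapDomain_add, ih n.succ_ne_zero, ← succ_nsmul]

theorem mapDomain_ne_zero_iff {d : σ →₀ ℕ} {i : τ} :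
    d.mapDomain π i ≠ 0 ↔ ∃ j, π j = i ∧ d j ≠ 0 := by
  classical
  simp_rw [← mem_support_iff, mapDomain_support_of_subsingletonAddUnits, Finset.mem_image]
  aesop

end Finsupp

namespace MvPolynomial

variable {k σ τ ι : Type*} [CommSemiring k]

theorem restrictScalars_span_X_image (s : Set σ) :
    (Ideal.span (X '' s) : Ideal (MvPolynomial σ k)).restrictScalars k =
      restrictSupport k {d | ∃ i ∈ s, d i ≠ 0} := by
  ext f
  simp [mem_ideal_span_X_image, mem_restrictSupport_iff, Set.subset_def]

theorem restrictSupport_iInter (U : ι → Set (σ →₀ ℕ)) :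
    restrictSupport k (⋂ i, U i) = ⨅ i, restrictSupport k (U i) := by
  ext f
  simp [mem_restrictSupport_iff]

theorem restrictSupport_le_restrictSupport_iff [Nontrivial k] {U V : Set (σ →₀ ℕ)} :
    restrictSupport k U ≤ restrictSupport k V ↔ U ⊆ V := by
  refine ⟨fun h d hd => ?_, restrictSupport_mono k⟩
  simpa using h ((monomial_mem_restrictSupport k (r := 1)).mpr (Or.inl hd))

-- `(I i).restrictScalars k = restrictSupport k (U i)` says that `I i` is the monomial ideal
-- with exponent set `U i`.
variable {I : ι → Ideal (MvPolynomial σ k)} {U : ι → Set (σ →₀ ℕ)}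

theorem restrictScalars_iInf_pow_eq (hI : ∀ i, (I i).restrictScalars k = restrictSupport k (U i))
    {m : ℕ} (hm : m ≠ 0) :
    (⨅ i, I i ^ m).restrictScalars k = restrictSupport k (⋂ i, m • U i) := by
  simp_rw [Submodule.restrictScalars_iInf, Submodule.restrictScalars_pow hm, hI,
    ← restrictSupport_nsmul, restrictSupport_iInter]

theorem restrictScalars_pow_iInf_eq (hI : ∀ i, (I i).restrictScalars k = restrictSupport k (U i))
    {r : ℕ} (hr : r ≠ 0) :
    ((⨅ i, I i) ^ r).restrictScalars k = restrictSupport k (r • ⋂ i, U i) := by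
  simp_rw [Submodule.restrictScalars_pow hr, Submodule.restrictScalars_iInf, hI,
    ← restrictSupport_iInter, restrictSupport_nsmul]

theorem iInf_span_X_preimage_pow_le_iff [Nontrivial k] {π : σ → τ}
    (hπ : Function.Surjective π) (T : ι → Set τ) {m r : ℕ} (hm : m ≠ 0) (hr : r ≠ 0) :
    (⨅ i, Ideal.span (X '' (π ⁻¹' T i)) ^ m : Ideal (MvPolynomial σ k)) ≤
        (⨅ i, Ideal.span (X '' (π ⁻¹' T i))) ^ r ↔
      (⨅ i, Ideal.span (X '' T i) ^ m : Ideal (MvPolynomial τ k)) ≤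
        (⨅ i, Ideal.span (X '' T i)) ^ r := by
  set G : ι → Set (τ →₀ ℕ) := fun i => {e | ∃ j ∈ T i, e j ≠ 0}
  have hJ (i : ι) : (Ideal.span (X '' T i) : Ideal (MvPolynomial τ k)).restrictScalars k =
      restrictSupport k (G i) :=
    restrictScalars_span_X_image _
  have hI (i : ι) : (Ideal.span (X '' (π ⁻¹' T i)) : Ideal (MvPolynomial σ k)).restrictScalars k =
      restrictSupport k (Finsupp.mapDomain π ⁻¹' G i) := by
    rw [restrictScalars_span_X_image]
    congr 1
    ext d
    simp [G, Finsupp.mapDomain_ne_zero_iff]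
  rw [← Submodule.restrictScalars_le k, restrictScalars_iInf_pow_eq hI hm,
    restrictScalars_pow_iInf_eq hI hr, restrictSupport_le_restrictSupport_iff,
    ← Submodule.restrictScalars_le k, restrictScalars_iInf_pow_eq hJ hm,
    restrictScalars_pow_iInf_eq hJ hr, restrictSupport_le_restrictSupport_iff]
  simp_rw [← Finsupp.preimage_mapDomain_nsmul _ _ hm, ← Set.preimage_iInter,
    ← Finsupp.preimage_mapDomain_nsmul _ _ hr]
  exact (Finsupp.mapDomain_surjective hπ).preimage_subset_preimage_iff

end MvPolynomial

def pairIndex (s : ℕ) (j : Fin (2 * s)) : Fin s :=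
  ⟨j / 2, by omega⟩

theorem pairIndex_surjective (s : ℕ) : Function.Surjective (pairIndex s) :=
  fun i => ⟨⟨2 * i, by omega⟩, by ext; simp [pairIndex]⟩

theorem coordLineIdeal_eq_span_X_preimage (k : Type*) [Field k] (s : ℕ) (i : Fin s) :
    coordLineIdeal k s i = Ideal.span (X '' (pairIndex s ⁻¹' {i' | i' ≠ i})) := by
  rw [coordLineIdeal]
  congr 2
  ext j
  simp only [Set.mem_ofPred_eq, Set.mem_preimage, ne_eq, Fin.ext_iff, pairIndex]
  omega

theorem coordLinesSymb_le_pow_iff {k : Type*} [Field k] {s m r : ℕ} (hm : m ≠ 0) (hr : r ≠ 0) :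
    coordLinesSymb k s m ≤ (⨅ i, coordLineIdeal k s i) ^ r ↔
      (⨅ i, coordPointIdeal k s i ^ m) ≤ (⨅ i, coordPointIdeal k s i) ^ r := by
  simp_rw [coordLinesSymb, coordLineIdeal_eq_span_X_preimage]
  exact MvPolynomial.iInf_span_X_preimage_pow_le_iff (pairIndex_surjective s) _ hm hr

theorem statement13_general {k : Type*} [Field k] {s : ℕ}
    (I : Ideal (MvPolynomial (Fin (2 * s)) k)) (hI : I = ⨅ i : Fin s, coordLineIdeal k s i)
    (J : Ideal (MvPolynomial (Fin s) k)) (hJ : J = ⨅ i : Fin s, coordPointIdeal k s i) :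
    (∀ m r : ℕ, 0 < m → 0 < r →
      (coordLinesSymb k s m ≤ I ^ r ↔ (⨅ i : Fin s, coordPointIdeal k s i ^ m) ≤ J ^ r)) ∧
    resurgence I (coordLinesSymb k s) =
      resurgence J (fun m => ⨅ i : Fin s, coordPointIdeal k s i ^ m) := by
  subst hI hJ
  have key (m r : ℕ) (hm : 0 < m) (hr : 0 < r) :=
    coordLinesSymb_le_pow_iff (k := k) (s := s) hm.ne' hr.ne'
  refine ⟨key, congrArg sSup (Set.ext fun x => ?_)⟩
  exact exists₂_congr fun m r => and_congr_right fun hm => and_congr_right fun hr =>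
    and_congr_left fun _ => not_congr (key m r hm hr)

/-- Comparing the ideal `I` of the `s` disjoint coordinate lines of `P^{2s−1}` with the
ideal `J` of the `s` coordinate points of `P^{s−1}`: `I^(m) ⊆ I^r` iff `J^(m) ⊆ J^r`, for all
positive integers `m, r`; consequently `ρ(I) = ρ(J)`. -/
theorem statement13 {k : Type*} [Field k] {s : ℕ} (hs : 2 ≤ s)
    (I : Ideal (MvPolynomial (Fin (2 * s)) k)) (hI : I = ⨅ i : Fin s, coordLineIdeal k s i)
    (J : Ideal (MvPolynomial (Fin s) k)) (hJ : J = ⨅ i : Fin s, coordPointIdeal k s i) :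
    (∀ m r : ℕ, 0 < m → 0 < r →
      (coordLinesSymb k s m ≤ I ^ r ↔ (⨅ i : Fin s, coordPointIdeal k s i ^ m) ≤ J ^ r)) ∧
    resurgence I (coordLinesSymb k s) =
      resurgence J (fun m => ⨅ i : Fin s, coordPointIdeal k s i ^ m) :=
  statement13_general I hI J hJ
end

section
/- Let k be a field and R = k[x_0,...,x_N]. Let V be a nonempty subset of the variables {x_0,...,x_N}, let V_1,...,V_r be a partition of V into nonempty pairwise disjoint subsets, and let I_j be the ideal of R generated by V_j. Then for any nonnegative integers m_1,...,m_r, not all zero, one has I_1^{m_1}···I_r^{m_r} = ⋂_{j=1}^r I_j^{m_j}. -/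
open MvPolynomial Filter

/-!
A polynomial lies in `span (X '' S) ^ n` only if each of its monomials has degree at least `n` in
the variables of `S`, i.e. `weight (S.indicator 1)` at least `n`. Conversely, if a monomial meets
this bound for every block `S j` of a family of pairwise disjoint sets of variables, its `S j`-parts
are disjoint factors of it, the `j`-th one lying in `span (X '' S j) ^ m j`; so the monomial lies in
the product of these ideals. Polynomials in the intersection are sums of such monomials.
-/
open Function Finsupp

namespace MvPolynomial

universe u v

variable {σ : Type u} {R : Type v} [CommSemiring R]

theorem le_weight_of_mem_support_mul {w : σ → ℕ} {a b : ℕ} {p q : MvPolynomial σ R}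
    (hp : ∀ d ∈ p.support, a ≤ weight w d) (hq : ∀ d ∈ q.support, b ≤ weight w d) :
    ∀ d ∈ (p * q).support, a + b ≤ weight w d := by
  classical
  intro d hd
  obtain ⟨u, hu, v, hv, rfl⟩ := Finset.mem_add.1 (support_mul p q hd)
  rw [map_add]
  exact add_le_add (hp u hu) (hq v hv)

theorem le_weight_of_mem_span_X_image_pow {S : Set σ} {n : ℕ} {f : MvPolynomial σ R}
    (hf : f ∈ Ideal.span (X '' S) ^ n) : ∀ d ∈ f.support, n ≤ weight (S.indicator 1) d := by
  classical
  induction n generalizing f with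
  | zero => simp
  | succ n ih =>
    rw [pow_succ'] at hf
    refine Submodule.mul_induction_on hf (fun p hp q hq => ?_) fun p q hp hq d hd => ?_
    · rw [add_comm]
      refine le_weight_of_mem_support_mul (fun d hd => ?_) (ih hq)
      obtain ⟨i, hi, hdi⟩ := mem_ideal_span_X_image.1 hp d hd
      have := le_weight_of_ne_zero' (S.indicator (1 : σ → ℕ)) hdi
      rwa [Set.indicator_of_mem hi, Pi.one_apply] at this
    · rcases Finset.mem_union.1 (support_add hd) with h | h
      exacts [hp d h, hq d h]

theorem prod_X_pow_dvd_monomial {d : σ →₀ ℕ} {s : Finset σ} (hs : s ⊆ d.support) (c : R) :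
    ∏ i ∈ s, X i ^ d i ∣ monomial d c := by
  classical
  rw [monomial_eq, Finsupp.prod, ← Finset.prod_sdiff hs]
  exact Dvd.intro_left (C c * ∏ i ∈ d.support \ s, X i ^ d i) (by ring)

theorem prod_X_pow_mem_span_X_image_pow {S : Set σ} {n : ℕ} {d : σ →₀ ℕ} [DecidablePred (· ∈ S)]
    (hn : n ≤ weight (S.indicator 1) d) :
    ∏ i ∈ d.support with i ∈ S, X i ^ d i ∈ Ideal.span (X '' S : Set (MvPolynomial σ R)) ^ n := by
  have hweight : weight (S.indicator 1) d = ∑ i ∈ d.support with i ∈ S, d i := by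
    simp [weight_apply, Finsupp.sum, Finset.sum_filter, Set.indicator_apply]
  refine Ideal.pow_le_pow_right (hweight ▸ hn) ?_
  rw [← Finset.prod_pow_eq_pow_sum]
  exact Ideal.prod_mem_prod fun i hi =>
    Ideal.pow_mem_pow (Ideal.subset_span (Set.mem_image_of_mem X (Finset.mem_filter.1 hi).2)) _

theorem monomial_mem_prod_span_X_image_pow {ι : Type*} [Fintype ι] {S : ι → Set σ}
    (hS : Pairwise (Disjoint on S)) {m : ι → ℕ} {d : σ →₀ ℕ}
    (hd : ∀ j, m j ≤ weight ((S j).indicator 1) d) (c : R) :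
    monomial d c ∈ ∏ j, Ideal.span (X '' S j : Set (MvPolynomial σ R)) ^ m j := by
  classical
  set s : ι → Finset σ := fun j => d.support.filter (· ∈ S j)
  have hdisj : (Set.univ : Set ι).PairwiseDisjoint s := fun i _ j _ hij =>
    Finset.disjoint_filter.2 fun x _ hi hj => Set.disjoint_left.1 (hS hij) hi hj
  have hsub : Finset.univ.biUnion s ⊆ d.support :=
    Finset.biUnion_subset.2 fun j _ => Finset.filter_subset _ _
  obtain ⟨g, hg⟩ := prod_X_pow_dvd_monomial hsub c
  rw [hg, Finset.prod_biUnion (by simpa using hdisj)]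
  exact Ideal.mul_mem_right _ _
    (Ideal.prod_mem_prod fun j _ => prod_X_pow_mem_span_X_image_pow (hd j))

theorem prod_span_X_image_pow_eq_iInf {ι : Type*} [Fintype ι] {S : ι → Set σ}
    (hS : Pairwise (Disjoint on S)) (m : ι → ℕ) :
    ∏ j, Ideal.span (X '' S j : Set (MvPolynomial σ R)) ^ m j =
      ⨅ j, Ideal.span (X '' S j) ^ m j := by
  refine le_antisymm (le_iInf fun j => Ideal.prod_le_inf.trans (Finset.inf_le (Finset.mem_univ j)))
    fun f hf => ?_
  rw [f.as_sum]
  exact Ideal.sum_mem _ fun d hd => monomial_mem_prod_span_X_image_pow hS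
    (fun j => le_weight_of_mem_span_X_image_pow (Ideal.mem_iInf.1 hf j) d hd) _

end MvPolynomial

theorem statement14_general {k : Type*} [Field k] {N r : ℕ}
    (Vs : Fin r → Set (Fin (N + 1)))
    (hdisj : ∀ i j, i ≠ j → Disjoint (Vs i) (Vs j))
    (Idl : Fin r → Ideal (MvPolynomial (Fin (N + 1)) k))
    (hIdl : ∀ j, Idl j = Ideal.span (MvPolynomial.X '' Vs j))
    (m : Fin r → ℕ) :
    ∏ j, Idl j ^ m j = ⨅ j, Idl j ^ m j := by
  obtain rfl : Idl = fun j => Ideal.span (X '' Vs j) := funext hIdl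
  exact prod_span_X_image_pow_eq_iInf (fun i j hij => hdisj i j hij) m

/-- Lemma: let `V` be a nonempty set of the variables of `k[x_0,…,x_N]`, partitioned into
nonempty pairwise disjoint subsets `V_1,…,V_r`, and let `I_j` be the ideal generated by
`V_j`.  Then for nonnegative integers `m_1,…,m_r`, not all zero,
`I_1^{m_1} ⋯ I_r^{m_r} = ⋂_j I_j^{m_j}`. -/
theorem statement14 {k : Type*} [Field k] {N r : ℕ}
    (V : Set (Fin (N + 1))) (hV : V.Nonempty)
    (Vs : Fin r → Set (Fin (N + 1)))
    (hne : ∀ j, (Vs j).Nonempty)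
    (hdisj : ∀ i j, i ≠ j → Disjoint (Vs i) (Vs j))
    (hcover : (⋃ j, Vs j) = V)
    (Idl : Fin r → Ideal (MvPolynomial (Fin (N + 1)) k))
    (hIdl : ∀ j, Idl j = Ideal.span (MvPolynomial.X '' Vs j))
    (m : Fin r → ℕ) (hm : ∃ j, m j ≠ 0) :
    ∏ j, Idl j ^ m j = ⨅ j, Idl j ^ m j :=
  statement14_general Vs hdisj Idl hIdl m
end

section
/- Let k be a field, let L_1,...,L_s be s pairwise distinct lines in P^3, let I = I(L_1) ∩ ... ∩ I(L_s) ⊂ k[x_0,x_1,x_2,x_3], and set I^(m) = I(L_1)^m ∩ ... ∩ I(L_s)^m. Then for all integers t ≥ m ≥ 1, dim_k (I^(m))_t ≥ C(t+3,3) − s·[(t+2) − (2m+1)/3]·C(m+1,2). -/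
open MvPolynomial Filter

/-- The symbolic powers of the radical ideal of a union of disjoint lines (given as
2-dimensional linear subspaces, i.e. affine cones of lines in projective space):
`I^(m) = I(L_1)^m ∩ … ∩ I(L_s)^m`. -/
noncomputable def linesSymbolicPower {k : Type*} [Field k] {n s : ℕ}
    (W : Fin s → Submodule k (Fin n → k)) (m : ℕ) : Ideal (MvPolynomial (Fin n) k) :=
  ⨅ i, (MvPolynomial.vanishingIdeal k ((W i : Set (Fin n → k)))) ^ m

/-- The dimension of the degree-`j` homogeneous component of an ideal of the
polynomial ring. -/
noncomputable def hilbDim {k : Type*} [Field k] {n : ℕ}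
    (I : Ideal (MvPolynomial (Fin n) k)) (j : ℕ) : ℕ :=
  Module.finrank k
    ↥(Submodule.restrictScalars k I ⊓ MvPolynomial.homogeneousSubmodule (Fin n) k j)


/-! A line `L ⊂ P^3` is cut out by two independent linear forms. After a linear change of
coordinates they become `x₀, x₁`, so the images of the monomials `x^d` of degree `t` with
`d₀ + d₁ ≥ m` are linearly independent elements of `I(L)^m`. Hence `I(L)^m` has codimension at
most `#{d : |d| = t, d₀ + d₁ < m} = ∑_{j<m} (j+1)(t-j+1) = ((t+2) - (2m+1)/3) C(m+1,2)` in the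
`C(t+3,3)`-dimensional space of forms of degree `t`, and the codimension of an intersection of
subspaces is at most the sum of their codimensions. -/

open Finset Module Matrix

theorem Submodule.finrank_le_finrank_inf_iInf_add {K V ι : Type*} [Field K] [AddCommGroup V]
    [Module K V] [Fintype ι] (U : Submodule K V) [FiniteDimensional K U] (C : ι → Submodule K V)
    {c : ℕ} (h : ∀ i, finrank K U ≤ finrank K ↥(U ⊓ C i) + c) :
    finrank K U ≤ finrank K ↥(U ⊓ ⨅ i, C i) + Fintype.card ι * c := by
  classical
  suffices ∀ F : Finset ι, finrank K U ≤ finrank K ↥(U ⊓ F.inf C) + #F * c by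
    have := this univ
    rwa [inf_univ_eq_iInf, card_univ] at this
  intro F
  induction F using Finset.cons_induction with
  | empty => rw [inf_empty, inf_top_eq, card_empty, zero_mul, add_zero]
  | cons a F ha ih =>
    have : FiniteDimensional K ↥(U ⊓ C a) := Submodule.finiteDimensional_of_le inf_le_left
    have : FiniteDimensional K ↥(U ⊓ F.inf C) := Submodule.finiteDimensional_of_le inf_le_left
    have hmod := Submodule.finrank_sup_add_finrank_inf_eq (U ⊓ C a) (U ⊓ F.inf C)
    have hsup := Submodule.finrank_mono (sup_le (inf_le_left : U ⊓ C a ≤ U)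
      (inf_le_left : U ⊓ F.inf C ≤ U))
    rw [← inf_inf_distrib_left] at hmod
    rw [inf_cons, card_cons]
    linarith [h a]

section Counting

variable {σ : Type*} [Fintype σ] [DecidableEq σ]

theorem Finset.card_filter_finsuppAntidiag_sum_eq_le (S : Finset σ) (t j : ℕ) :
    #{d ∈ univ.finsuppAntidiag t | ∑ i ∈ S, d i = j} ≤
      #(S.finsuppAntidiag j) * #(Sᶜ.finsuppAntidiag (t - j)) := by
  rw [← card_product]
  refine card_le_card_of_injOn (fun d => (d.filter (· ∈ S), d.filter (· ∉ S))) ?_ ?_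
  · intro d hd
    simp only [coe_filter, mem_finsuppAntidiag, subset_univ, and_true, Set.mem_ofPred_eq] at hd
    have hsplit := sum_add_sum_compl S d
    have htotal : ∑ i, d i = t := hd.1
    simp only [coe_product, Set.mem_prod, mem_coe, mem_finsuppAntidiag, Finsupp.support_filter]
    refine ⟨⟨?_, fun i hi => (mem_filter.1 hi).2⟩, ?_,
      fun i hi => mem_compl.2 (mem_filter.1 hi).2⟩
    · rw [← hd.2]
      exact sum_congr rfl fun i hi => Finsupp.filter_apply_pos _ _ hi
    · rw [sum_congr rfl fun i hi => Finsupp.filter_apply_pos (· ∉ S) d (mem_compl.1 hi)]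
      omega
  · intro d _ d' _ h
    simp only [Prod.mk.injEq] at h
    rw [← Finsupp.filter_add_filter_not d (· ∈ S), ← Finsupp.filter_add_filter_not d' (· ∈ S),
      h.1, h.2]

theorem Finset.card_filter_finsuppAntidiag_sum_lt_le (S : Finset σ) (t m : ℕ) :
    #{d ∈ univ.finsuppAntidiag t | ∑ i ∈ S, d i < m} ≤
      ∑ j ∈ range m, (#S).multichoose j * (#Sᶜ).multichoose (t - j) := by
  rw [card_eq_sum_card_fiberwise (f := fun d : σ →₀ ℕ => ∑ i ∈ S, d i) (t := range m)
    fun d hd => mem_range.2 (mem_filter.1 (mem_coe.1 hd)).2]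
  refine sum_le_sum fun j _ => ?_
  rw [← card_finsuppAntidiag_nat_eq_multichoose, ← card_finsuppAntidiag_nat_eq_multichoose,
    filter_filter]
  exact (card_le_card fun d hd => mem_filter.2 ⟨(mem_filter.1 hd).1, (mem_filter.1 hd).2.2⟩).trans
    (card_filter_finsuppAntidiag_sum_eq_le S t j)

end Counting

theorem cast_sum_range_mul_eq {m t : ℕ} (h : m ≤ t + 1) :
    ((∑ j ∈ range m, (j + 1) * (t - j + 1) : ℕ) : ℚ) =
      ((t : ℚ) + 2 - (2 * m + 1) / 3) * ((m + 1).choose 2 : ℕ) := by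
  induction m with
  | zero => simp
  | succ m ih =>
    rw [sum_range_succ, Nat.cast_add, ih (by omega), Nat.cast_choose_two, Nat.cast_choose_two]
    push_cast [Nat.cast_sub (by omega : m ≤ t)]
    ring

theorem Pi.basisFun_dualBasis_equivFun_dotProduct {σ k : Type*} [Fintype σ] [DecidableEq σ]
    [Field k] (f : Dual k (σ → k)) (x : σ → k) :
    (Pi.basisFun k σ).dualBasis.equivFun f ⬝ᵥ x = f x := by
  rw [LinearMap.pi_apply_eq_sum_univ f x, dotProduct]
  refine sum_congr rfl fun j _ => ?_
  rw [Basis.dualBasis_equivFun, Pi.basisFun_apply, smul_eq_mul, mul_comm]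
  congr 2
  funext l
  simp [Pi.single_apply, eq_comm]

namespace MvPolynomial

section LinearForm

variable {σ R : Type*} [Fintype σ] [CommSemiring R]

noncomputable def linearForm (a : σ → R) : MvPolynomial σ R := ∑ j, C (a j) * X j

theorem isHomogeneous_linearForm (a : σ → R) : (linearForm a).IsHomogeneous 1 :=
  IsHomogeneous.sum _ _ _ fun _ _ => isHomogeneous_C_mul_X _ _

theorem aeval_linearForm (x : σ → R) (a : σ → R) : aeval x (linearForm a) = a ⬝ᵥ x := by
  simp [linearForm, dotProduct]

theorem aeval_linearForm_linearForm (M : Matrix σ σ R) (a : σ → R) :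
    aeval (fun i => linearForm (M i)) (linearForm a) = linearForm (a ᵥ* M) := by
  simp only [linearForm, map_sum, map_mul, aeval_C, aeval_X, algebraMap_eq]
  simp_rw [mul_sum, vecMul, dotProduct, map_sum, sum_mul, C_mul, mul_assoc]
  exact sum_comm

theorem linearForm_single [DecidableEq σ] (i : σ) : linearForm (Pi.single i (1 : R)) = X i := by
  simp [linearForm, Pi.single_apply, ite_mul]

theorem aeval_linearForm_injective [DecidableEq σ] {M : Matrix σ σ R} (hM : IsUnit M) :
    Function.Injective (aeval (R := R) fun i => linearForm (M i)) := by
  obtain ⟨u, rfl⟩ := hM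
  refine Function.LeftInverse.injective
    (g := aeval fun i => linearForm ((u⁻¹ : (Matrix σ σ R)ˣ) i)) fun p => ?_
  suffices h : (aeval fun i => linearForm ((u⁻¹ : (Matrix σ σ R)ˣ) i)).comp
      (aeval (R := R) fun i => linearForm ((u : Matrix σ σ R) i)) = AlgHom.id R _ from
    DFunLike.congr_fun h p
  refine algHom_ext fun i => ?_
  rw [AlgHom.comp_apply, aeval_X, aeval_linearForm_linearForm, ← Matrix.mul_apply_eq_vecMul,
    Units.mul_inv, ← linearForm_single]
  congr 1
  funext j
  exact one_eq_pi_single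

end LinearForm

variable {σ k : Type*} [Fintype σ] [DecidableEq σ] [Field k]

instance (t : ℕ) : FiniteDimensional k (homogeneousSubmodule σ k t) :=
  Module.Finite.iff_fg.2 (homogeneousSubmodule_fg σ k t)

theorem finrank_homogeneousSubmodule (t : ℕ) :
    finrank k (homogeneousSubmodule σ k t) = #((univ : Finset σ).finsuppAntidiag t) := by
  have hset : {d : σ →₀ ℕ | d.degree = t} = ↑((univ : Finset σ).finsuppAntidiag t) := by
    ext d
    simp [Finsupp.degree_eq_sum]
  rw [homogeneousSubmodule_eq_finsupp_supported, hset]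
  exact (finrank_eq_card_basis (basisRestrictSupport k _)).trans (Fintype.card_coe _)

theorem aeval_monomial_mem_pow {P : Ideal (MvPolynomial σ k)} {ℓ : σ → MvPolynomial σ k}
    {S : Finset σ} (hS : ∀ i ∈ S, ℓ i ∈ P) {m : ℕ} {d : σ →₀ ℕ} (hd : m ≤ ∑ i ∈ S, d i) :
    aeval (R := k) ℓ (monomial d 1) ∈ P ^ m := by
  rw [aeval_monomial, map_one, one_mul, Finsupp.prod_fintype _ _ fun i => pow_zero _,
    ← prod_mul_prod_compl S]
  refine Ideal.mul_mem_right _ _ (Ideal.pow_le_pow_right hd ?_)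
  rw [← prod_pow_eq_pow_sum]
  exact Ideal.prod_mem_prod fun i hi => Ideal.pow_mem_pow (hS i hi) _

theorem card_le_finrank_inf_pow {P : Ideal (MvPolynomial σ k)} {M : Matrix σ σ k}
    (hM : IsUnit M) {S : Finset σ} (hS : ∀ i ∈ S, linearForm (M i) ∈ P) (m t : ℕ) :
    #{d ∈ (univ : Finset σ).finsuppAntidiag t | m ≤ ∑ i ∈ S, d i} ≤
      finrank k ↥(homogeneousSubmodule σ k t ⊓ (P ^ m).restrictScalars k) := by
  let D := {d ∈ (univ : Finset σ).finsuppAntidiag t | m ≤ ∑ i ∈ S, d i}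
  let φ := aeval (R := k) fun i => linearForm (M i)
  let v : D → MvPolynomial σ k := fun d => φ (monomial d.1 1)
  have hv : LinearIndependent k v :=
    ((basisMonomials σ k).linearIndependent.comp _ Subtype.val_injective).map'
      φ.toLinearMap (LinearMap.ker_eq_bot.2 (aeval_linearForm_injective hM))
  have hspan : Submodule.span k (Set.range v) ≤
      homogeneousSubmodule σ k t ⊓ (P ^ m).restrictScalars k := by
    rw [Submodule.span_le]
    rintro _ ⟨⟨d, hd⟩, rfl⟩
    obtain ⟨hdt, hdm⟩ := mem_filter.1 hd
    rw [SetLike.mem_coe, Submodule.mem_inf, Submodule.restrictScalars_mem,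
      mem_homogeneousSubmodule]
    refine ⟨?_, aeval_monomial_mem_pow hS hdm⟩
    have hdeg : d.degree = t := by simpa [Finsupp.degree_eq_sum] using hdt
    have := (isHomogeneous_monomial (1 : k) hdeg).aeval _ fun i => isHomogeneous_linearForm (M i)
    rwa [one_mul] at this
  calc #D = finrank k (Submodule.span k (Set.range v)) := by
        rw [finrank_span_eq_card hv, Fintype.card_coe]
    _ ≤ _ := Submodule.finrank_mono hspan

theorem exists_isUnit_linearForm_mem_vanishingIdeal (W : Submodule k (σ → k)) :
    ∃ (M : Matrix σ σ k) (S : Finset σ), IsUnit M ∧ #S + finrank k W = Fintype.card σ ∧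
      ∀ i ∈ S, linearForm (M i) ∈ vanishingIdeal k (W : Set (σ → k)) := by
  -- The rows of `M` are a basis of the dual space extending a basis of `W.dualAnnihilator`.
  obtain ⟨N, hc⟩ := W.dualAnnihilator.exists_isCompl
  have := Module.Free.of_divisionRing k W.dualAnnihilator
  have := Module.Free.of_divisionRing k N
  let B := ((finBasis k W.dualAnnihilator).prod (finBasis k N)).map
    (Submodule.prodEquivOfIsCompl _ _ hc)
  let e := Fintype.equivOfCardEq <| (finrank_eq_card_basis B).symm.trans <| by
    rw [Subspace.dual_finrank_eq, finrank_fintype_fun_eq_card]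
  let B' := B.reindex e
  let toFun := (Pi.basisFun k σ).dualBasis.equivFun
  refine ⟨fun i => toFun (B' i), univ.map (Function.Embedding.inl.trans e.toEmbedding),
    linearIndependent_rows_iff_isUnit.1 (B'.linearIndependent.map' _ toFun.ker), ?_, ?_⟩
  · rw [card_map, card_univ, Fintype.card_fin, add_comm,
      Subspace.finrank_add_finrank_dualAnnihilator_eq, finrank_fintype_fun_eq_card]
  · simp only [Finset.mem_map, mem_univ, true_and, Function.Embedding.trans_apply]
    rintro _ ⟨a, rfl⟩
    have hmem : B' (e (Sum.inl a)) ∈ W.dualAnnihilator := by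
      simp [B', B, Submodule.coe_prodEquivOfIsCompl']
    rw [mem_vanishingIdeal_iff]
    intro x hx
    rw [aeval_linearForm, Pi.basisFun_dualBasis_equivFun_dotProduct]
    exact (Submodule.mem_dualAnnihilator _).1 hmem x hx

theorem finrank_homogeneousSubmodule_le_finrank_inf_vanishingIdeal_pow_add
    (W : Submodule k (σ → k)) (m t : ℕ) :
    finrank k (homogeneousSubmodule σ k t) ≤
      finrank k ↥(homogeneousSubmodule σ k t ⊓
        (vanishingIdeal k (W : Set (σ → k)) ^ m).restrictScalars k) +
      ∑ j ∈ range m, (Fintype.card σ - finrank k W).multichoose j *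
        (finrank k W).multichoose (t - j) := by
  obtain ⟨M, S, hM, hS, hmem⟩ := exists_isUnit_linearForm_mem_vanishingIdeal W
  have hSc : #Sᶜ = finrank k W := by rw [card_compl]; omega
  have hlow := card_le_finrank_inf_pow hM hmem m t
  have hhigh := card_filter_finsuppAntidiag_sum_lt_le S t m
  rw [← hSc, show Fintype.card σ - #Sᶜ = #S by rw [card_compl]; omega, finrank_homogeneousSubmodule,
    ← card_filter_add_card_filter_not (fun d : σ →₀ ℕ => m ≤ ∑ i ∈ S, d i)]
  simp only [not_le] at hhigh ⊢
  omega

end MvPolynomial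

theorem statement17_general {k : Type*} [Field k] {s : ℕ}
    (W : Fin s → Submodule k (Fin 4 → k))
    (hdim : ∀ i, Module.finrank k ↥(W i) = 2) :
    ∀ m t : ℕ, 1 ≤ m → m ≤ t →
      (((t + 3).choose 3 : ℚ) -
          (s : ℚ) * (((t : ℚ) + 2) - (2 * (m : ℚ) + 1) / 3) * ((m + 1).choose 2 : ℚ))
        ≤ (hilbDim (linesSymbolicPower W m) t : ℚ) := by
  intro m t _ hmt
  set V := homogeneousSubmodule (Fin 4) k t
  have hline (i : Fin s) : finrank k V ≤ finrank k ↥(V ⊓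
      (vanishingIdeal k (W i : Set (Fin 4 → k)) ^ m).restrictScalars k) +
        ∑ j ∈ range m, (j + 1) * (t - j + 1) := by
    simpa [hdim i, Nat.multichoose_two] using
      finrank_homogeneousSubmodule_le_finrank_inf_vanishingIdeal_pow_add (W i) m t
  have hdimV : finrank k V = (t + 3).choose 3 := by
    rw [finrank_homogeneousSubmodule, card_finsuppAntidiag_nat_eq_choose, card_univ,
      Fintype.card_fin, show 4 + t - 1 = t + 3 by omega, Nat.choose_symm_add]
  have hsum := cast_sum_range_mul_eq (show m ≤ t + 1 by omega)
  have hunion := Submodule.finrank_le_finrank_inf_iInf_add V _ hline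
  rw [hdimV, ← Submodule.restrictScalars_iInf, inf_comm, Fintype.card_fin] at hunion
  rw [hilbDim, linesSymbolicPower, mul_assoc, ← hsum, sub_le_iff_le_add]
  exact_mod_cast hunion

/-- For the ideal `I` of a union of `s` distinct lines in `P^3` and all `t ≥ m ≥ 1`,
`dim (I^(m))_t ≥ C(t+3,3) − s((t+2) − (2m+1)/3) C(m+1,2)`. -/
theorem statement17 {k : Type*} [Field k] {s : ℕ}
    (W : Fin s → Submodule k (Fin 4 → k))
    (hdim : ∀ i, Module.finrank k ↥(W i) = 2)
    (hdistinct : ∀ i j, i ≠ j → W i ≠ W j)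
    (I : Ideal (MvPolynomial (Fin 4) k))
    (hI : I = ⨅ i, MvPolynomial.vanishingIdeal k ((W i : Set (Fin 4 → k)))) :
    ∀ m t : ℕ, 1 ≤ m → m ≤ t →
      (((t + 3).choose 3 : ℚ) -
          (s : ℚ) * (((t : ℚ) + 2) - (2 * (m : ℚ) + 1) / 3) * ((m + 1).choose 2 : ℚ))
        ≤ (hilbDim (linesSymbolicPower W m) t : ℚ) :=
  statement17_general W hdim
end

section
/- Let s ≥ 1 be an integer and let g be the largest real root of the polynomial τ³ − 3sτ + 2s. Let m and t be positive integers. (i) If t/m > g, then C(it+3,3) − s·[(it+2) − (2im+1)/3]·C(im+1,2) > 0 for all sufficiently large positive integers i. (ii) If s ≥ 17 and 1 ≤ t/m < g, then C(t+3,3) − s·[(t+2) − (2m+1)/3]·C(m+1,2) < 0. -/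
open Filter

lemma chR2 (n : ℕ) : (((n+1).choose 2 : ℕ) : ℝ) = n*(n+1)/2 := by
  induction n with
  | zero => simp
  | succ k ih =>
    rw [show k+1+1 = (k+1)+1 from rfl, Nat.choose_succ_succ (k+1) 1, Nat.choose_one_right]
    push_cast
    push_cast at ih
    rw [ih]; ring

lemma chR3 (n : ℕ) : (((n+3).choose 3 : ℕ) : ℝ) = (n+1)*(n+2)*(n+3)/6 := by
  induction n with
  | zero => norm_num [Nat.choose]
  | succ k ih =>
    have h2 := chR2 (k+2)
    rw [show k+1+3 = (k+3)+1 from rfl, Nat.choose_succ_succ (k+3) 2]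
    push_cast
    push_cast at ih h2
    rw [show ((k:ℝ)+3) = (k+2)+1 by ring] at *
    rw [ih, h2]; ring

lemma cubicM (s x : ℝ) (hs1 : 1 ≤ s) (hx1 : 1 ≤ x) :
    (0:ℝ) ≤ (x+3*s)^3 - 3*s*(x+3*s) + 2*s := by
  have hx0 : (0:ℝ) < x := by linarith
  have hs0 : (0:ℝ) < s := by linarith
  have h3x : (0:ℝ) < 3*x - 1 := by linarith
  nlinarith [mul_pos (mul_pos hx0 hx0) hx0, mul_pos (mul_pos hs0 hx0) h3x,
    mul_pos (mul_pos hs0 hs0) h3x, mul_pos (mul_pos hs0 hs0) hs0]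

lemma evpos (D B C : ℝ) (hD : 0 < D) :
    ∀ᶠ i : ℕ in atTop, 0 < D*(i:ℝ)^3 + B*(i:ℝ)^2 + C*(i:ℝ) + 6 := by
  filter_upwards [eventually_ge_atTop (⌈(|B|+|C|+6)/D⌉₊ + 1)] with i hi
  have hiR : (|B|+|C|+6)/D + 1 ≤ (i:ℝ) := by
    have h1 : ((⌈(|B|+|C|+6)/D⌉₊ + 1 : ℕ) : ℝ) ≤ (i:ℝ) := by exact_mod_cast hi
    have h2 := Nat.le_ceil ((|B|+|C|+6)/D)
    push_cast at h1
    linarith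
  have hrpos : 0 ≤ (|B|+|C|+6)/D := by positivity
  have hi1 : (1:ℝ) ≤ (i:ℝ) := by linarith
  have hii : (0:ℝ) < (i:ℝ)^2 := by positivity
  have hDi : |B|+|C|+6 < D * (i:ℝ) := by
    have h1 : D * ((|B|+|C|+6)/D + 1) ≤ D * (i:ℝ) :=
      mul_le_mul_of_nonneg_left hiR (le_of_lt hD)
    rw [mul_add, mul_div_cancel₀ _ (ne_of_gt hD)] at h1
    linarith
  have P1 : 0 < (D*(i:ℝ) - (|B|+|C|+6)) * (i:ℝ)^2 := mul_pos (by linarith) hii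
  have P2 : 0 ≤ (|B|+B) * (i:ℝ)^2 :=
    mul_nonneg (by linarith [neg_abs_le B]) (le_of_lt hii)
  have P3 : 0 ≤ (|C|+C) * (i:ℝ) := mul_nonneg (by linarith [neg_abs_le C]) (by linarith)
  have P4 : 0 ≤ |C| * ((i:ℝ)^2 - (i:ℝ)) := by
    apply mul_nonneg (abs_nonneg C)
    nlinarith
  nlinarith [P1, P2, P3, P4]

set_option maxHeartbeats 1000000 in
/-- Lemma: let `g` be the largest real root of `τ³ − 3sτ + 2s` for an integer `s ≥ 1`, and
let `m, t` be positive integers.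
(i) If `t/m > g`, then `C(it+3,3) − s((it+2) − (2im+1)/3)·C(im+1,2) > 0` for all
sufficiently large `i`.
(ii) If `s ≥ 17` and `1 ≤ t/m < g`, then `C(t+3,3) − s((t+2) − (2m+1)/3)·C(m+1,2) < 0`. -/
theorem statement18 (s : ℕ) (hs : 1 ≤ s) (g : ℝ)
    (hgroot : g ^ 3 - 3 * (s : ℝ) * g + 2 * (s : ℝ) = 0)
    (hglargest : ∀ x : ℝ, x ^ 3 - 3 * (s : ℝ) * x + 2 * (s : ℝ) = 0 → x ≤ g)
    (m t : ℕ) (hm : 0 < m) (ht : 0 < t) :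
    (g < (t : ℝ) / m →
      ∀ᶠ i : ℕ in atTop,
        (0 : ℝ) <
          (((i * t + 3).choose 3 : ℕ) : ℝ) -
            (s : ℝ) * ((((i * t : ℕ) : ℝ) + 2) - (2 * ((i * m : ℕ) : ℝ) + 1) / 3) *
              (((i * m + 1).choose 2 : ℕ) : ℝ)) ∧
    (17 ≤ s → 1 ≤ (t : ℝ) / m → (t : ℝ) / m < g →
      (((t + 3).choose 3 : ℕ) : ℝ) -
          (s : ℝ) * (((t : ℝ) + 2) - (2 * (m : ℝ) + 1) / 3) *
            (((m + 1).choose 2 : ℕ) : ℝ) < 0) := by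
  have hs1 : (1:ℝ) ≤ s := by exact_mod_cast hs
  have hm0 : (0:ℝ) < m := by exact_mod_cast hm
  have ht0 : (0:ℝ) < t := by exact_mod_cast ht
  have hcont : Continuous fun y : ℝ => y^3 - 3*(s:ℝ)*y + 2*(s:ℝ) := by continuity
  -- g ≥ 1
  have hg1 : (1:ℝ) ≤ g := by
    have h1 : (1:ℝ)^3 - 3*(s:ℝ)*1 + 2*(s:ℝ) ≤ 0 := by nlinarith
    have hM : (0:ℝ) ≤ (1+3*(s:ℝ))^3 - 3*(s:ℝ)*(1+3*(s:ℝ)) + 2*(s:ℝ) :=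
      cubicM (s:ℝ) 1 hs1 le_rfl
    obtain ⟨r, hrmem, hr⟩ :=
      intermediate_value_Icc (by nlinarith : (1:ℝ) ≤ 1+3*(s:ℝ)) hcont.continuousOn ⟨h1, hM⟩
    exact le_trans hrmem.1 (hglargest r hr)
  constructor
  · -- part (i)
    intro hgt
    have hpx : 0 < ((t:ℝ)/m)^3 - 3*(s:ℝ)*((t:ℝ)/m) + 2*(s:ℝ) := by
      by_contra h
      push_neg at h
      have hx1 : 1 < (t:ℝ)/m := lt_of_le_of_lt hg1 hgt
      have hM := cubicM (s:ℝ) ((t:ℝ)/m) hs1 (le_of_lt hx1)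
      obtain ⟨r, hrmem, hr⟩ :=
        intermediate_value_Icc (by nlinarith : (t:ℝ)/m ≤ (t:ℝ)/m+3*(s:ℝ))
          hcont.continuousOn ⟨h, hM⟩
      have h1 := hglargest r hr
      have h2 := hrmem.1
      linarith
    have hD : 0 < (t:ℝ)^3 - 3*(s:ℝ)*t*(m:ℝ)^2 + 2*(s:ℝ)*(m:ℝ)^3 := by
      have h1 := mul_pos hpx (pow_pos hm0 3)
      have heq : (((t:ℝ)/m)^3 - 3*(s:ℝ)*((t:ℝ)/m) + 2*(s:ℝ)) * (m:ℝ)^3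
          = (t:ℝ)^3 - 3*(s:ℝ)*t*(m:ℝ)^2 + 2*(s:ℝ)*(m:ℝ)^3 := by
        field_simp
      rw [heq] at h1
      exact h1
    have hev := evpos ((t:ℝ)^3 - 3*(s:ℝ)*t*(m:ℝ)^2 + 2*(s:ℝ)*(m:ℝ)^3)
      (6*(t:ℝ)^2 - 3*(s:ℝ)*(m:ℝ)^2 - 3*(s:ℝ)*(t:ℝ)*(m:ℝ)) (11*(t:ℝ) - 5*(s:ℝ)*(m:ℝ)) hD
    filter_upwards [hev] with i hkey
    rw [chR3 (i*t), chR2 (i*m)]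
    push_cast
    nlinarith [hkey]
  · -- part (ii)
    intro hs17 hx1 hxg
    have hs17' : (17:ℝ) ≤ s := by exact_mod_cast hs17
    have hmt : (m:ℝ) ≤ t := by
      have := (le_div_iff₀ hm0).1 hx1
      linarith
    have htg : (t:ℝ) < g*m := (div_lt_iff₀ hm0).1 hxg
    have hg1' : 1 < g := lt_of_le_of_lt hx1 hxg
    have hg2 : g^2 < 3*(s:ℝ) := by nlinarith
    have hg65 : (13:ℝ)/2 < g := by
      by_contra h
      push_neg at h
      nlinarith [mul_nonneg (mul_nonneg (show (0:ℝ) ≤ g-1 by linarith)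
          (show (0:ℝ) ≤ 13/2-g by linarith)) (show (0:ℝ) ≤ g+8 by linarith),
        sq_nonneg (g - 5/2),
        mul_nonneg (show (0:ℝ) ≤ (s:ℝ)-17 by linarith) (show (0:ℝ) ≤ 3*g-2 by linarith)]
    have hq1 : 3*(s:ℝ) < g^2 + g + 1 := by
      nlinarith [mul_pos (show (0:ℝ) < 3*g-2 by linarith) (show (0:ℝ) < g-1 by linarith)]
    have hx1' : (1:ℝ) ≤ (t:ℝ)/m := hx1
    have hq : 0 < ((t:ℝ)/m)^2 + g*((t:ℝ)/m) + g^2 - 3*(s:ℝ) := by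
      nlinarith [hq1, mul_nonneg (show (0:ℝ) ≤ (t:ℝ)/m - 1 by linarith)
          (show (0:ℝ) ≤ (t:ℝ)/m + 1 by linarith),
        mul_nonneg (show (0:ℝ) ≤ g by linarith) (show (0:ℝ) ≤ (t:ℝ)/m - 1 by linarith)]
    have hpx : ((t:ℝ)/m)^3 - 3*(s:ℝ)*((t:ℝ)/m) + 2*(s:ℝ) < 0 := by
      nlinarith [mul_neg_of_neg_of_pos (show (t:ℝ)/m - g < 0 by linarith) hq]
    have hA : (t:ℝ)^3 + 2*(s:ℝ)*(m:ℝ)^3 < 3*(s:ℝ)*(t:ℝ)*(m:ℝ)^2 := by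
      have h1 := mul_neg_of_neg_of_pos hpx (pow_pos hm0 3)
      have heq : (((t:ℝ)/m)^3 - 3*(s:ℝ)*((t:ℝ)/m) + 2*(s:ℝ)) * (m:ℝ)^3
          = (t:ℝ)^3 - 3*(s:ℝ)*t*(m:ℝ)^2 + 2*(s:ℝ)*(m:ℝ)^3 := by
        field_simp
      rw [heq] at h1
      linarith
    have hD' : g*(t:ℝ) < 3*(s:ℝ)*m := by
      nlinarith [mul_pos (show (0:ℝ) < g by linarith) (show (0:ℝ) < g*m - t by linarith),
        mul_pos hm0 (show (0:ℝ) < 3*(s:ℝ) - g^2 by linarith)]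
    have hm1 : (1:ℝ) ≤ m := by exact_mod_cast hm
    rw [chR3 t, chR2 m]
    push_cast
    nlinarith [hA, mul_pos ht0 (show (0:ℝ) < 3*(s:ℝ)*m - g*t by linarith),
      mul_nonneg (mul_nonneg (le_of_lt ht0) (le_of_lt ht0)) (show (0:ℝ) ≤ g - 13/2 by linarith),
      sq_nonneg ((t:ℝ) - 11),
      mul_nonneg (show (0:ℝ) ≤ 3*(s:ℝ)-51 by linarith)
        (mul_nonneg (le_of_lt hm0) (le_of_lt hm0)),
      mul_nonneg (show (0:ℝ) ≤ (m:ℝ)-1 by linarith) (show (0:ℝ) ≤ (m:ℝ)+1 by linarith),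
      mul_nonneg (show (0:ℝ) ≤ 5*(s:ℝ)-85 by linarith) (le_of_lt hm0)]
end
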